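/- Let n ≥ 2 and let Λ be the symbol of the bipartition 2^{n−1}.∅ with charge σ₁ = (−2,1). Consider the set of block symbols: the symbols of charge σ₀ of the bipartitions in PS(n), the symbols of charge σ₁ of the bipartitions in L_{B₂}(n), and the symbols of charge σ₂ of the bipartitions in L_{B₆}(n). Among these, the symbols Λ' satisfying Λ' ⊲ Λ are exactly the three symbols of charge σ₀ of the bipartitions 1^{2n}.∅, ∅.21^{2n−2} and ∅.1^{2n}. -/

import Mathlib

open scoped Classical

noncomputable section

/-- A partition: an antitone, eventually zero sequence of natural numbers.
`parts k` is the `(k+1)`-st part `λ_{k+1}`. -/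
structure Partition' where
  parts : ℕ → ℕ
  antitone' : Antitone parts
  exists_zero : ∃ N, parts N = 0

namespace Partition'

lemma sorted_getD_antitone {l : List ℕ} (h : l.Pairwise (· ≥ ·)) :
    Antitone (fun k => l.getD k 0) := by
  intro i j hij
  simp only
  rcases lt_or_ge j l.length with hj | hj
  · have hi : i < l.length := lt_of_le_of_lt hij hj
    rw [List.getD_eq_getElem l 0 hj, List.getD_eq_getElem l 0 hi]
    rcases eq_or_lt_of_le hij with rfl | hlt
    · exact le_rfl
    · exact List.pairwise_iff_getElem.mp h i j hi hj hlt
  · rw [List.getD_eq_default l 0 hj]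
    exact Nat.zero_le _

/-- The partition whose multiset of (nonzero) parts is the multiset of nonzero
elements of `m`. -/
def ofMul (m : Multiset ℕ) : Partition' where
  parts := fun k => ((m.sort (· ≤ ·)).reverse).getD k 0
  antitone' := by
    apply sorted_getD_antitone
    rw [List.pairwise_reverse]
    exact Multiset.pairwise_sort ..
  exists_zero := ⟨((m.sort (· ≤ ·)).reverse).length, List.getD_eq_default _ _ le_rfl⟩

/-- The size `|λ|` of a partition: the sum of its parts. -/
def size (p : Partition') : ℕ := ∑ i ∈ Finset.range (Nat.find p.exists_zero), p.parts i

lemma finite_gt (p : Partition') (k : ℕ) : {i : ℕ | k < p.parts i}.Finite := by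
  obtain ⟨N, hN⟩ := p.exists_zero
  apply (Set.finite_Iio N).subset
  intro i hi
  simp only [Set.mem_setOf_eq] at hi
  by_contra hc
  simp only [Set.mem_Iio, not_lt] at hc
  have := p.antitone' hc
  omega

/-- The conjugate (transpose) partition. -/
def conj (p : Partition') : Partition' where
  parts := fun k => {i : ℕ | k < p.parts i}.ncard
  antitone' := fun a b hab =>
    Set.ncard_le_ncard (fun i hi => lt_of_le_of_lt hab hi) (p.finite_gt a)
  exists_zero := by
    refine ⟨p.parts 0, ?_⟩
    have h : {i : ℕ | p.parts 0 < p.parts i} = ∅ := by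
      ext i
      simp only [Set.mem_setOf_eq, Set.mem_empty_iff_false, iff_false, not_lt]
      exact p.antitone' (Nat.zero_le i)
    show {i : ℕ | p.parts 0 < p.parts i}.ncard = 0
    rw [h, Set.ncard_empty]

/-- The 180°-rotation of the complement of `p` inside the rectangle with
`rows` rows of length `c`: the partition `(c - p_rows, c - p_{rows-1}, …, c - p₁)`. -/
def rotCompl (c rows : ℕ) (p : Partition') : Partition' where
  parts := fun k => if k < rows then c - p.parts (rows - 1 - k) else 0
  antitone' := by
    intro a b hab
    by_cases hb : b < rows
    · have ha : a < rows := lt_of_le_of_lt hab hb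
      simp only [if_pos hb, if_pos ha]
      exact Nat.sub_le_sub_left (p.antitone' (by omega)) c
    · simp only [if_neg hb]
      exact Nat.zero_le _
  exists_zero := ⟨rows, by simp⟩

end Partition'

/-- A bipartition: a pair of partitions. -/
abbrev Bipartition := Partition' × Partition'

/-- The size of a bipartition. -/
def Bipartition.size (l : Bipartition) : ℕ := l.1.size + l.2.size

/-- The bipartition whose components have parts the multisets `a` and `b`. -/
def bip (a b : Multiset ℕ) : Bipartition := (Partition'.ofMul a, Partition'.ofMul b)

/-- The multiset of parts of the partition `a 1^b` (one part `a`, then `b` parts `1`). -/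
def hook (a b : ℕ) : Multiset ℕ := a ::ₘ Multiset.replicate b 1

/-- The charged β-set of a partition, as a sequence:
`betaSet p s i = λ_{i+1} + s - (i+1) + 1`. -/
def betaSet (p : Partition') (s : ℤ) (i : ℕ) : ℤ := (p.parts i : ℤ) + s - i

/-- The charged symbol of a bipartition with charge `σ`, as a pair of subsets of `ℤ`. -/
def symbolOf (l : Bipartition) (σ : ℤ × ℤ) : Set ℤ × Set ℤ :=
  (Set.range (betaSet l.1 σ.1), Set.range (betaSet l.2 σ.2))

/-- The charge `σ_t`. -/
def sigmaT (t : ℕ) : ℤ × ℤ :=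
  if Even t then ((t : ℤ), -1 - (t : ℤ)) else (-1 - (t : ℤ), (t : ℤ))

/-- The trivial symbol `({0,-1,-2,…},{-1,-2,-3,…})`, the symbol of the empty
bipartition with charge `σ₀ = (0,-1)`. -/
def trivialSymbol : Set ℤ × Set ℤ := ({z : ℤ | z ≤ 0}, {z : ℤ | z ≤ -1})

/-- Removing one `n`-co-hook from the symbol `Λ`, yielding `Λ'`: remove `x+n` from one
row, adjoin `x` to the other row, and exchange the two rows. -/
def CohookStep (n : ℕ) (Λ Λ' : Set ℤ × Set ℤ) : Prop :=
  (∃ x : ℤ, x + n ∈ Λ.1 ∧ x ∉ Λ.2 ∧ Λ' = (Λ.2 ∪ {x}, Λ.1 \ {x + n})) ∨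
  (∃ x : ℤ, x + n ∈ Λ.2 ∧ x ∉ Λ.1 ∧ Λ' = (Λ.2 \ {x + n}, Λ.1 ∪ {x}))

/-- `C` is the `n`-co-core of `Λ`: it is obtained from `Λ` by recursively removing
`n`-co-hooks, and no further `n`-co-hook can be removed. -/
def IsCocore (n : ℕ) (Λ C : Set ℤ × Set ℤ) : Prop :=
  Relation.ReflTransGen (CohookStep n) Λ C ∧ ∀ C', ¬ CohookStep n C C'

/-- Number of entries of the charged β-set of `p` that are `≥ α` (with multiplicity). -/
def betaCountGE (p : Partition') (s α : ℤ) : ℕ := Nat.card {i : ℕ // α ≤ betaSet p s i}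

/-- Number of entries `≥ α`, with multiplicity, of the multiset union of the two rows
of the symbol of `l` with charge `σ`. -/
def symCountGE (l : Bipartition) (σ : ℤ × ℤ) (α : ℤ) : ℕ :=
  betaCountGE l.1 σ.1 α + betaCountGE l.2 σ.2 α

/-- The composition `ϖ_Λ` of the symbol of `l` with charge `σ`: `comp l σ k` is the
`(k+1)`-st largest entry (with multiplicity) of the multiset union of the two rows. -/
def comp (l : Bipartition) (σ : ℤ × ℤ) (k : ℕ) : ℤ :=
  sSup {z : ℤ | k + 1 ≤ symCountGE l σ z}

/-- All partial sums of the composition of the symbol `(l,σ)` are bounded by those of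
`(m,τ)`. -/
def DomLE (l : Bipartition) (σ : ℤ × ℤ) (m : Bipartition) (τ : ℤ × ℤ) : Prop :=
  ∀ j : ℕ, ∑ k ∈ Finset.range j, comp l σ k ≤ ∑ k ∈ Finset.range j, comp m τ k

/-- Strict dominance `Λ ⊲ Λ'` of symbols: the compositions differ and all partial sums
of the first are bounded by those of the second. -/
def DomLT (l : Bipartition) (σ : ℤ × ℤ) (m : Bipartition) (τ : ℤ × ℤ) : Prop :=
  comp l σ ≠ comp m τ ∧ DomLE l σ m τ

/-- A box `(x, y, j)` (0-indexed row `x`, 0-indexed column `y`, component `j`: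
`j = 0` is the first component, `j = 1` the second). -/
abbrev Box := ℕ × ℕ × Fin 2

/-- The component of a bipartition selected by `j : Fin 2`. -/
def Bipartition.partsOf (l : Bipartition) (j : Fin 2) : Partition' := if j = 0 then l.1 else l.2

/-- Membership of a box in the Young diagram of a bipartition. -/
def MemY (l : Bipartition) (b : Box) : Prop := b.2.1 < (l.partsOf b.2.2).parts b.1

/-- The entry of the charge `σ` corresponding to component `j`. -/
def chargeOf (σ : ℤ × ℤ) (j : Fin 2) : ℤ := if j = 0 then σ.1 else σ.2

/-- The charged content `co^σ(b) = y - x + σ_j` of a box. -/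
def content (σ : ℤ × ℤ) (b : Box) : ℤ := (b.2.1 : ℤ) - (b.1 : ℤ) + chargeOf σ b.2.2

/-- `j(b) ∈ {1,2}`: the component of a box, numbered 1 or 2. -/
def jval (b : Box) : ℕ := (b.2.2 : ℕ) + 1

/-- The counting function of the Dunkl–Griffeth order. -/
def dgCount (l : Bipartition) (s : ℤ × ℤ) (d : ℕ) (α : ℝ) (j : ℕ) : ℕ :=
  Nat.card {b : Box // MemY l b ∧
    (α < (content s b : ℝ) - (jval b : ℝ) * (d : ℝ) / 2 ∨
      ((content s b : ℝ) - (jval b : ℝ) * (d : ℝ) / 2 = α ∧ jval b ≤ j))}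

/-- The Dunkl–Griffeth order `λ ⪯_s μ` (with respect to `d`). -/
def DGLE (l m : Bipartition) (s : ℤ × ℤ) (d : ℕ) : Prop :=
  ∀ (α : ℝ), ∀ j ∈ ({1, 2} : Set ℕ), dgCount l s d α j ≤ dgCount m s d α j

/-- A box of the extended Young diagram: rows are infinite to the left, so the column
coordinate is an integer.  `(x, y, j)` is the box in (0-indexed) row `x`, with integer
column coordinate `y` (`y = 0` is the first column), in component `j`. -/
abbrev ExtBox := ℕ × ℤ × Fin 2

/-- Membership in the extended Young diagram of a bipartition. -/
def MemExtY (l : Bipartition) (b : ExtBox) : Prop :=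
  b.2.1 < ((l.partsOf b.2.2).parts b.1 : ℤ)

/-- The charged content of an extended box. -/
def contentExt (σ : ℤ × ℤ) (b : ExtBox) : ℤ := b.2.1 - (b.1 : ℤ) + chargeOf σ b.2.2

/-- `b` is a removable box of the bipartition `l`. -/
def Removable (l : Bipartition) (b : Box) : Prop :=
  (l.partsOf b.2.2).parts b.1 = b.2.1 + 1 ∧ (l.partsOf b.2.2).parts (b.1 + 1) ≤ b.2.1

/-- `b` is an addable box of the bipartition `l`. -/
def Addable (l : Bipartition) (b : Box) : Prop :=
  (l.partsOf b.2.2).parts b.1 = b.2.1 ∧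
    (b.1 = 0 ∨ b.2.1 + 1 ≤ (l.partsOf b.2.2).parts (b.1 - 1))

/-- The order in which boxes are listed in the `i`-word: increasing charged content,
a component-2 box preceding a component-1 box of equal charged content. -/
def BoxLT (σ : ℤ × ℤ) (b b' : Box) : Prop :=
  content σ b < content σ b' ∨
    (content σ b = content σ b' ∧ b.2.2 = 1 ∧ b'.2.2 = 0)

/-- `L` is the list of boxes underlying the `i`-word of `(l, σ)` with respect to `d`:
it lists, in increasing order, exactly the addable and removable boxes of `l` whose
charged content is congruent to `i` modulo `d`. -/
def IsIWord (l : Bipartition) (σ : ℤ × ℤ) (d : ℕ) (i : ZMod d) (L : List Box) : Prop :=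
  L.Pairwise (BoxLT σ) ∧
    ∀ b : Box, b ∈ L ↔ ((Addable l b ∨ Removable l b) ∧ ((content σ b : ZMod d) = i))

/-- The sign of a box in the `i`-word: `true` (`+`) for addable, `false` (`−`) for
removable boxes. -/
def signOf (l : Bipartition) (b : Box) : Bool := if Addable l b then true else false

/-- One reduction step on words: delete an adjacent pair `−+`. -/
def RedStep (w w' : List Bool) : Prop :=
  ∃ u v : List Bool, w = u ++ false :: true :: v ∧ w' = u ++ v

/-- `ẽ_i l = 0`: the reduced `i`-word of `(l, σ)` contains no `−`, i.e. the `i`-word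
reduces to a word consisting only of `+`'s. -/
def AnnihilatedE (l : Bipartition) (σ : ℤ × ℤ) (d : ℕ) (i : ZMod d) : Prop :=
  ∃ L : List Box, IsIWord l σ d i L ∧
    ∃ a : ℕ, Relation.ReflTransGen RedStep (L.map (signOf l)) (List.replicate a true)

/-- `q` is obtained from the partition `p` by adding one box. -/
def PCovers (p q : Partition') : Prop :=
  ∃ x : ℕ, q.parts x = p.parts x + 1 ∧ ∀ y : ℕ, y ≠ x → q.parts y = p.parts y

/-- `m` is obtained from the bipartition `l` by adding one box to its Young diagram. -/
def BipCovers (l m : Bipartition) : Prop :=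
  (PCovers l.1 m.1 ∧ m.2 = l.2) ∨ (m.1 = l.1 ∧ PCovers l.2 m.2)

/-- `A(l) = Σ_μ μ`, the sum over all bipartitions obtained from `l` by adding one box,
as an element of the group of `ℤ`-valued functions on bipartitions. -/
def addB (l : Bipartition) : Bipartition → ℤ := fun m => if BipCovers l m then 1 else 0

/-- The projection `π_S` onto the span of the bipartitions lying in `S`. -/
def projS (S : Set Bipartition) (f : Bipartition → ℤ) : Bipartition → ℤ :=
  fun m => if m ∈ S then f m else 0

/-- The basis element of `ℤ[BP]` corresponding to a bipartition. -/
def deltaB (l : Bipartition) : Bipartition → ℤ := fun m => if m = l then 1 else 0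

/-- The bipartitions of `2n` labelling the principal-series unipotent characters in
the principal `Φ_{2n}`-block. -/
def PS (n : ℕ) : Set Bipartition :=
  {l | (∃ i j : ℕ, 0 < i ∧ i < n ∧ j ≤ n ∧
          l = bip (hook (n - i) j) (hook (n - j + 1) (i - 1))) ∨
       (∃ j : ℕ, j < 2 * n ∧ l = bip (hook (2 * n - j) j) 0) ∨
       (∃ i : ℕ, 0 < i ∧ i ≤ 2 * n ∧ l = bip 0 (hook (2 * n - i + 1) (i - 1)))}

/-- The bipartitions of `2n-2` labelling the `B₂`-series unipotent characters in the
principal `Φ_{2n}`-block: `2^i 1^{j-i-1} . (n-i-1)(n-j)` for `0 ≤ i < j ≤ n`. -/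
def LB2 (n : ℕ) : Set Bipartition :=
  {l | ∃ i j : ℕ, i < j ∧ j ≤ n ∧
        l = bip (Multiset.replicate i 2 + Multiset.replicate (j - i - 1) 1)
                {n - i - 1, n - j}}

/-- The bipartitions of `2n-6` labelling the `B₆`-series unipotent characters in the
principal `Φ_{2n}`-block: `(n-i-2)(n-j-1) . 2^{i-1} 1^{j-i-1}` for `0 < i < j < n`. -/
def LB6 (n : ℕ) : Set Bipartition :=
  {l | ∃ i j : ℕ, 0 < i ∧ i < j ∧ j < n ∧
        l = bip {n - i - 2, n - j - 1}
                (Multiset.replicate (i - 1) 2 + Multiset.replicate (j - i - 1) 1)}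

end

/-! The first entry of a composition is the larger of the top β-numbers of the two rows,
and for the symbol `Λ` of `2^{n-1}.∅` with charge `σ₁` it is `1`; so no block symbol with a
β-number `≥ 2` is dominated by `Λ`.  The block symbols escaping this test are the three claimed
ones, `1^n.21^{n-2}`, whose two largest entries `1, 1` already exceed `1, 0`, and
`1^{n+1}.1^{n-1}` and `2^{n-1}.∅` (charge `σ₁`), whose compositions coincide with that of `Λ`.
For the three claimed symbols the compositions are explicit, and dominance is certified by the
gap `D : ℕ → ℕ` between the partial sums, characterised by `D 0 = 0` and
`ϖ'_k + D (k+1) = ϖ_k + D k`. -/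

namespace Partition'

theorem ext_parts {p q : Partition'} (h : p.parts = q.parts) : p = q := by
  cases p; cases q; cases h; rfl

theorem parts_ofMul_coe {L : List ℕ} (h : L.Pairwise (· ≥ ·)) (k : ℕ) :
    (ofMul (L : Multiset ℕ)).parts k = L.getD k 0 := by
  have hsort : (L : Multiset ℕ).sort (· ≤ ·) = L.reverse :=
    List.Perm.eq_of_pairwise' (Multiset.pairwise_sort _ _)
      (List.pairwise_reverse.mpr h)
      ((Multiset.coe_eq_coe.mp (Multiset.sort_eq _ _)).trans (List.reverse_perm L).symm)
  simp [ofMul, hsort]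

theorem parts_ofMul_replicate (c v k : ℕ) :
    (ofMul (Multiset.replicate c v)).parts k = if k < c then v else 0 := by
  rw [← Multiset.coe_replicate, parts_ofMul_coe (List.pairwise_replicate.mpr (Or.inr le_rfl))]
  grind

theorem parts_ofMul_zero (k : ℕ) : (ofMul 0).parts k = 0 := by
  simpa using parts_ofMul_replicate 0 0 k

theorem parts_ofMul_hook {a : ℕ} (b : ℕ) (ha : 1 ≤ a) (k : ℕ) :
    (ofMul (hook a b)).parts k = if k = 0 then a else if k ≤ b then 1 else 0 := by
  have hsorted : (a :: List.replicate b 1).Pairwise (· ≥ ·) :=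
    List.pairwise_cons.mpr ⟨fun x hx => by simp at hx; omega,
      List.pairwise_replicate.mpr (Or.inr le_rfl)⟩
  have hcoe : hook a b = ((a :: List.replicate b 1 : List ℕ) : Multiset ℕ) := by
    simp [hook, ← Multiset.coe_replicate]
  rw [hcoe, parts_ofMul_coe hsorted]
  cases k with
  | zero => simp
  | succ k =>
    rw [List.getD_cons_succ]
    grind

theorem parts_ofMul_pair {a b : ℕ} (hab : b ≤ a) (k : ℕ) :
    (ofMul {a, b}).parts k = if k = 0 then a else if k = 1 then b else 0 := by
  rw [show ({a, b} : Multiset ℕ) = (([a, b] : List ℕ) : Multiset ℕ) from rfl,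
    parts_ofMul_coe (by simp [hab])]
  match k with
  | 0 => simp
  | 1 => simp
  | k + 2 => simp

end Partition'

theorem hook_one (b : ℕ) : hook 1 b = Multiset.replicate (b + 1) 1 := by
  rw [hook, Multiset.replicate_succ]

open Partition'

section BetaSet

variable (p : Partition') (s : ℤ)

theorem betaSet_antitone : Antitone (betaSet p s) := by
  intro i j hij
  have := p.antitone' hij
  simp only [betaSet]
  omega

theorem finite_setOf_le_betaSet (α : ℤ) : {i : ℕ | α ≤ betaSet p s i}.Finite := by
  obtain ⟨N, hN⟩ := p.exists_zero
  refine (Set.finite_Iio (N + (s - α).toNat + 1)).subset fun i hi => ?_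
  simp only [Set.mem_ofPred_eq, betaSet] at hi
  by_contra! hc
  simp only [Set.mem_Iio, not_lt] at hc
  have : p.parts i ≤ p.parts N := p.antitone' (by omega)
  omega

theorem betaCountGE_eq_ncard (α : ℤ) :
    betaCountGE p s α = {i : ℕ | α ≤ betaSet p s i}.ncard :=
  Nat.card_coe_set_eq _

theorem betaCountGE_antitone : Antitone (betaCountGE p s) := fun α β hαβ => by
  rw [betaCountGE_eq_ncard, betaCountGE_eq_ncard]
  exact Set.ncard_le_ncard (fun _ hi => le_trans hαβ hi) (finite_setOf_le_betaSet p s α)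

variable {p s}

theorem betaCountGE_eq {α : ℤ} {m : ℕ} (h1 : ∀ i < m, α ≤ betaSet p s i)
    (h2 : betaSet p s m < α) : betaCountGE p s α = m := by
  have hset : {i : ℕ | α ≤ betaSet p s i} = Set.Iio m := by
    ext i
    refine ⟨fun hi => ?_, h1 i⟩
    by_contra! hc
    exact (lt_of_le_of_lt (le_trans hi (betaSet_antitone p s (by simpa using hc))) h2).false
  simp [betaCountGE_eq_ncard, hset, Set.ncard_eq_toFinset_card']

theorem lt_betaCountGE {α : ℤ} {i : ℕ} (h : α ≤ betaSet p s i) :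
    i < betaCountGE p s α := by
  have hsub : Set.Iic i ⊆ {j : ℕ | α ≤ betaSet p s j} := fun j hj =>
    le_trans h (betaSet_antitone p s hj)
  have := Set.ncard_le_ncard hsub (finite_setOf_le_betaSet p s α)
  simp only [Set.ncard_eq_toFinset_card', Set.toFinset_Iic, Nat.card_Iic] at this
  rw [betaCountGE_eq_ncard]
  omega

theorem betaCountGE_ofMul_zero (α : ℤ) : betaCountGE (ofMul 0) s α = (s + 1 - α).toNat := by
  apply betaCountGE_eq <;> simp only [betaSet, parts_ofMul_zero] <;> omega

theorem betaCountGE_ofMul_replicate (c v : ℕ) (α : ℤ) :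
    betaCountGE (ofMul (Multiset.replicate c v)) s α =
      if v + 1 + s - c ≤ α then (v + 1 + s - α).toNat
      else if 1 + s - c ≤ α then c
      else (1 + s - α).toNat := by
  split_ifs <;>
  refine betaCountGE_eq (fun i hi => ?_) ?_ <;>
  simp only [betaSet, parts_ofMul_replicate] <;> split_ifs <;> omega

theorem betaCountGE_ofMul_hook_two (c : ℕ) (α : ℤ) :
    betaCountGE (ofMul (hook 2 c)) s α =
      if 3 + s ≤ α then 0
      else if 1 + s - c ≤ α then 1 + (1 + s - α).toNat
      else if s - c ≤ α then c + 1
      else (1 + s - α).toNat := by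
  split_ifs <;>
  refine betaCountGE_eq (fun i hi => ?_) ?_ <;>
  simp only [betaSet, parts_ofMul_hook c one_le_two] <;>
  split_ifs <;> first | contradiction | omega

end BetaSet

section Composition

variable {l m : Bipartition} {σ τ : ℤ × ℤ}

theorem symCountGE_bip (a b : Multiset ℕ) (s₁ s₂ α : ℤ) :
    symCountGE (bip a b) (s₁, s₂) α =
      betaCountGE (ofMul a) s₁ α + betaCountGE (ofMul b) s₂ α :=
  rfl

theorem symCountGE_antitone (l : Bipartition) (σ : ℤ × ℤ) : Antitone (symCountGE l σ) :=
  fun _ _ hαβ => add_le_add (betaCountGE_antitone _ _ hαβ) (betaCountGE_antitone _ _ hαβ)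

theorem bddAbove_setOf_symCountGE (l : Bipartition) (σ : ℤ × ℤ) (k : ℕ) :
    BddAbove {z : ℤ | k + 1 ≤ symCountGE l σ z} := by
  refine ⟨max (betaSet l.1 σ.1 0) (betaSet l.2 σ.2 0), fun z hz => ?_⟩
  by_contra! hc
  rw [max_lt_iff] at hc
  have h1 : betaCountGE l.1 σ.1 z = 0 :=
    betaCountGE_eq (by simp) (lt_of_le_of_lt (betaSet_antitone _ _ (Nat.zero_le _)) hc.1)
  have h2 : betaCountGE l.2 σ.2 z = 0 :=
    betaCountGE_eq (by simp) (lt_of_le_of_lt (betaSet_antitone _ _ (Nat.zero_le _)) hc.2)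
  simp [symCountGE, h1, h2] at hz

theorem le_comp {k : ℕ} {v : ℤ} (h : k + 1 ≤ symCountGE l σ v) : v ≤ comp l σ k :=
  le_csSup (bddAbove_setOf_symCountGE l σ k) h

theorem comp_eq_of_symCountGE {k : ℕ} {v : ℤ} (h1 : k + 1 ≤ symCountGE l σ v)
    (h2 : symCountGE l σ (v + 1) ≤ k) : comp l σ k = v := by
  refine le_antisymm (csSup_le ⟨v, h1⟩ fun z hz => ?_) (le_comp h1)
  by_contra! hvz
  have := symCountGE_antitone l σ (show v + 1 ≤ z by omega)
  simp only [Set.mem_ofPred_eq] at hz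
  omega

theorem comp_eq_comp_of_symCountGE (h : ∀ α, symCountGE l σ α = symCountGE m τ α) :
    comp l σ = comp m τ := by
  funext k
  simp only [comp, h]

theorem DomLE.comp_zero_le (h : DomLE l σ m τ) : comp l σ 0 ≤ comp m τ 0 := by
  simpa using h 1

theorem betaSet_fst_zero_le_comp_zero : betaSet l.1 σ.1 0 ≤ comp l σ 0 :=
  le_comp (le_add_right (lt_betaCountGE le_rfl))

theorem betaSet_snd_zero_le_comp_zero : betaSet l.2 σ.2 0 ≤ comp l σ 0 :=
  le_comp (le_add_left (lt_betaCountGE le_rfl))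

theorem sum_range_add_eq_of_defect {a b : ℕ → ℤ} {D : ℕ → ℕ} (h0 : D 0 = 0)
    (hD : ∀ k, a k + D (k + 1) = b k + D k) (j : ℕ) :
    ∑ k ∈ Finset.range j, a k + D j = ∑ k ∈ Finset.range j, b k := by
  induction j with
  | zero => simp [h0]
  | succ j ih =>
    rw [Finset.sum_range_succ, Finset.sum_range_succ]
    linarith [hD j]

theorem domLT_of_defect (D : ℕ → ℕ) (h0 : D 0 = 0)
    (hD : ∀ k, comp l σ k + D (k + 1) = comp m τ k + D k) (hpos : ∃ k, D k ≠ 0) :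
    DomLT l σ m τ := by
  refine ⟨fun h => ?_, fun j => ?_⟩
  · have hzero : ∀ k, D k = 0 := by
      intro k
      induction k with
      | zero => exact h0
      | succ k ih => linarith [hD k, congrFun h k]
    obtain ⟨k, hk⟩ := hpos
    exact hk (hzero k)
  · have := sum_range_add_eq_of_defect h0 hD j
    omega

end Composition

section ExplicitCompositions

variable {n : ℕ} {l : Bipartition} {σ : ℤ × ℤ}

def compTwosEmpty (n k : ℕ) : ℤ :=
  if k = 0 then 1 else if k ≤ 2 * n - 1 then -(((k - 1) / 2 : ℕ) : ℤ)
  else -(((k + 1) / 2 : ℕ) : ℤ)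

def compOnesEmpty (n k : ℕ) : ℤ :=
  if k = 0 then 1 else if k ≤ 4 * n - 2 then -((k / 2 : ℕ) : ℤ)
  else -(((k + 1) / 2 : ℕ) : ℤ)

def compEmptyOnes (n k : ℕ) : ℤ :=
  if k ≤ 4 * n then -((k / 2 : ℕ) : ℤ) else -(((k + 1) / 2 : ℕ) : ℤ)

theorem comp_twosEmpty (hn : 1 ≤ n) :
    comp (bip (Multiset.replicate (n - 1) 2) 0) (-2, 1) = compTwosEmpty n := by
  funext k
  apply comp_eq_of_symCountGE <;>
  simp only [symCountGE_bip, betaCountGE_ofMul_replicate, betaCountGE_ofMul_zero,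
    compTwosEmpty] <;>
  split_ifs <;> omega

theorem comp_twosEmpty_zero (n : ℕ) :
    comp (bip (Multiset.replicate (n - 1) 2) 0) (-2, 1) 0 = 1 := by
  apply comp_eq_of_symCountGE <;>
  simp only [symCountGE_bip, betaCountGE_ofMul_replicate, betaCountGE_ofMul_zero] <;>
  split_ifs <;> omega

theorem comp_onesEmpty (hn : 1 ≤ n) :
    comp (bip (Multiset.replicate (2 * n) 1) 0) (0, -1) = compOnesEmpty n := by
  funext k
  apply comp_eq_of_symCountGE <;>
  simp only [symCountGE_bip, betaCountGE_ofMul_replicate, betaCountGE_ofMul_zero,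
    compOnesEmpty] <;>
  split_ifs <;> omega

theorem comp_emptyHookTwo (hn : 1 ≤ n) :
    comp (bip 0 (hook 2 (2 * n - 2))) (0, -1) = compOnesEmpty n := by
  funext k
  apply comp_eq_of_symCountGE <;>
  simp only [symCountGE_bip, betaCountGE_ofMul_hook_two, betaCountGE_ofMul_zero,
    compOnesEmpty] <;>
  split_ifs <;> omega

theorem comp_emptyOnes (n : ℕ) :
    comp (bip 0 (Multiset.replicate (2 * n) 1)) (0, -1) = compEmptyOnes n := by
  funext k
  apply comp_eq_of_symCountGE <;>
  simp only [symCountGE_bip, betaCountGE_ofMul_replicate, betaCountGE_ofMul_zero,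
    compEmptyOnes] <;>
  split_ifs <;> omega

theorem domLT_twosEmpty_of_comp_eq_compOnesEmpty (hn : 2 ≤ n)
    (h : comp l σ = compOnesEmpty n) :
    DomLT l σ (bip (Multiset.replicate (n - 1) 2) 0) (-2, 1) :=
  domLT_of_defect (fun j => if j ≤ 2 * n then (j - 1) / 2 else n - 1 - (j - 2 * n) / 2)
    (by simp)
    (fun k => by
      rw [h, comp_twosEmpty (by omega)]
      simp only [compOnesEmpty, compTwosEmpty]
      split_ifs <;> omega)
    ⟨3, by split_ifs <;> omega⟩

theorem domLT_onesEmpty_twosEmpty (hn : 2 ≤ n) :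
    DomLT (bip (Multiset.replicate (2 * n) 1) 0) (0, -1)
      (bip (Multiset.replicate (n - 1) 2) 0) (-2, 1) :=
  domLT_twosEmpty_of_comp_eq_compOnesEmpty hn (comp_onesEmpty (by omega))

theorem domLT_emptyHookTwo_twosEmpty (hn : 2 ≤ n) :
    DomLT (bip 0 (hook 2 (2 * n - 2))) (0, -1)
      (bip (Multiset.replicate (n - 1) 2) 0) (-2, 1) :=
  domLT_twosEmpty_of_comp_eq_compOnesEmpty hn (comp_emptyHookTwo (by omega))

theorem domLT_emptyOnes_twosEmpty (hn : 1 ≤ n) :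
    DomLT (bip 0 (Multiset.replicate (2 * n) 1)) (0, -1)
      (bip (Multiset.replicate (n - 1) 2) 0) (-2, 1) :=
  domLT_of_defect
    (fun j => if j = 0 then 0 else if j ≤ 2 * n then 1 + (j - 1) / 2 else n - (j - 2 * n) / 2)
    (by simp)
    (fun k => by
      rw [comp_emptyOnes, comp_twosEmpty hn]
      simp only [compEmptyOnes, compTwosEmpty]
      split_ifs <;> first | contradiction | omega)
    ⟨1, by simp only [one_ne_zero, if_false]; split_ifs <;> omega⟩

theorem not_domLT_twosEmpty_of_two_le_betaSet
    (h : 2 ≤ betaSet l.1 σ.1 0 ∨ 2 ≤ betaSet l.2 σ.2 0) :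
    ¬ DomLT l σ (bip (Multiset.replicate (n - 1) 2) 0) (-2, 1) := fun hd => by
  have := hd.2.comp_zero_le
  rw [comp_twosEmpty_zero] at this
  rcases h with h | h
  · linarith [betaSet_fst_zero_le_comp_zero (l := l) (σ := σ)]
  · linarith [betaSet_snd_zero_le_comp_zero (l := l) (σ := σ)]

end ExplicitCompositions

section Blocks

variable {n : ℕ} {l : Bipartition}

theorem not_domLT_hookOne_hookTwo (hn : 2 ≤ n) :
    ¬ DomLT (bip (hook 1 (n - 1)) (hook 2 (n - 2))) (0, -1)
      (bip (Multiset.replicate (n - 1) 2) 0) (-2, 1) := by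
  rintro ⟨-, hle⟩
  have htop₁ : 0 < betaCountGE (ofMul (hook 1 (n - 1))) 0 1 :=
    lt_betaCountGE (i := 0) (by simp [betaSet, parts_ofMul_hook])
  have htop₂ : 0 < betaCountGE (ofMul (hook 2 (n - 2))) (-1) 1 :=
    lt_betaCountGE (i := 0) (by simp [betaSet, parts_ofMul_hook])
  have hcomp₀ : 1 ≤ comp (bip (hook 1 (n - 1)) (hook 2 (n - 2))) (0, -1) 0 :=
    le_comp (by rw [symCountGE_bip]; omega)
  have hcomp₁ : 1 ≤ comp (bip (hook 1 (n - 1)) (hook 2 (n - 2))) (0, -1) 1 :=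
    le_comp (by rw [symCountGE_bip]; omega)
  have hsum := hle 2
  simp only [Finset.sum_range_succ, Finset.sum_range_zero, comp_twosEmpty (by omega : 1 ≤ n),
    compTwosEmpty] at hsum
  split_ifs at hsum <;> omega

theorem comp_hookOne_hookOne_eq (hn : 2 ≤ n) :
    comp (bip (hook 1 n) (hook 1 (n - 2))) (0, -1) =
      comp (bip (Multiset.replicate (n - 1) 2) 0) (-2, 1) := by
  refine comp_eq_comp_of_symCountGE fun α => ?_
  simp only [symCountGE_bip, hook_one, betaCountGE_ofMul_replicate, betaCountGE_ofMul_zero]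
  split_ifs <;> omega

theorem not_domLT_twosEmpty_of_hookPair {i j : ℕ} (hn : 2 ≤ n) (hi0 : 0 < i) (hin : i < n)
    (hjn : j ≤ n) :
    ¬ DomLT (bip (hook (n - i) j) (hook (n - j + 1) (i - 1))) (0, -1)
      (bip (Multiset.replicate (n - 1) 2) 0) (-2, 1) := by
  rcases (by omega :
      i ≤ n - 2 ∨ j ≤ n - 2 ∨ (i = n - 1 ∧ j = n - 1) ∨ (i = n - 1 ∧ j = n))
    with hi | hj | ⟨rfl, rfl⟩ | ⟨rfl, hj⟩
  · refine not_domLT_twosEmpty_of_two_le_betaSet (Or.inl ?_)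
    simp [bip, betaSet, parts_ofMul_hook _ (by omega : 1 ≤ n - i)]
    omega
  · refine not_domLT_twosEmpty_of_two_le_betaSet (Or.inr ?_)
    simp [bip, betaSet, parts_ofMul_hook _ (by omega : 1 ≤ n - j + 1)]
    omega
  · rw [show n - (n - 1) = 1 by omega, show n - 1 - 1 = n - 2 by omega]
    exact not_domLT_hookOne_hookTwo hn
  · subst j
    rw [show n - (n - 1) = 1 by omega, Nat.sub_self, zero_add,
      show n - 1 - 1 = n - 2 by omega]
    exact fun hd => hd.1 (comp_hookOne_hookOne_eq hn)

theorem eq_of_domLT_twosEmpty_of_hookEmpty {j : ℕ} (hj : j < 2 * n)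
    (hd : DomLT (bip (hook (2 * n - j) j) 0) (0, -1)
      (bip (Multiset.replicate (n - 1) 2) 0) (-2, 1)) :
    j = 2 * n - 1 := by
  by_contra hne
  refine not_domLT_twosEmpty_of_two_le_betaSet (Or.inl ?_) hd
  simp [bip, betaSet, parts_ofMul_hook _ (by omega : 1 ≤ 2 * n - j)]
  omega

theorem le_of_domLT_twosEmpty_of_emptyHook {i : ℕ} (hi : i ≤ 2 * n)
    (hd : DomLT (bip 0 (hook (2 * n - i + 1) (i - 1))) (0, -1)
      (bip (Multiset.replicate (n - 1) 2) 0) (-2, 1)) :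
    2 * n - 1 ≤ i := by
  by_contra! hlt
  refine not_domLT_twosEmpty_of_two_le_betaSet (Or.inr ?_) hd
  simp [bip, betaSet, parts_ofMul_hook _ (by omega : 1 ≤ 2 * n - i + 1)]
  omega

theorem eq_of_domLT_twosEmpty_of_mem_PS (hn : 2 ≤ n) (hl : l ∈ PS n)
    (hd : DomLT l (0, -1) (bip (Multiset.replicate (n - 1) 2) 0) (-2, 1)) :
    l = bip (Multiset.replicate (2 * n) 1) 0 ∨ l = bip 0 (hook 2 (2 * n - 2)) ∨
      l = bip 0 (Multiset.replicate (2 * n) 1) := by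
  rcases hl with ⟨i, j, hi0, hin, hjn, rfl⟩ | ⟨j, hj, rfl⟩ | ⟨i, hi0, hi, rfl⟩
  · exact absurd hd (not_domLT_twosEmpty_of_hookPair hn hi0 hin hjn)
  · obtain rfl := eq_of_domLT_twosEmpty_of_hookEmpty hj hd
    left
    rw [show 2 * n - (2 * n - 1) = 1 by omega, hook_one, show 2 * n - 1 + 1 = 2 * n by omega]
  · rcases (by have := le_of_domLT_twosEmpty_of_emptyHook hi hd; omega :
      i = 2 * n - 1 ∨ i = 2 * n) with rfl | rfl
    · right; left
      rw [show 2 * n - (2 * n - 1) + 1 = 2 by omega, show 2 * n - 1 - 1 = 2 * n - 2 by omega]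
    · right; right
      rw [Nat.sub_self, zero_add, hook_one, show 2 * n - 1 + 1 = 2 * n by omega]

theorem not_domLT_twosEmpty_of_mem_LB2 (hl : l ∈ LB2 n) :
    ¬ DomLT l (-2, 1) (bip (Multiset.replicate (n - 1) 2) 0) (-2, 1) := by
  obtain ⟨i, j, hij, hjn, rfl⟩ := hl
  rcases (by omega : i + 2 ≤ n ∨ (i = n - 1 ∧ j = n)) with hi | ⟨rfl, hj⟩
  · refine not_domLT_twosEmpty_of_two_le_betaSet (Or.inr ?_)
    simp only [bip, betaSet, parts_ofMul_pair (by omega : n - j ≤ n - i - 1), ↓reduceIte]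
    omega
  · subst j
    have hempty : ofMul {n - (n - 1) - 1, n - n} = ofMul 0 :=
      ext_parts (funext fun k => by
        rw [parts_ofMul_pair (by omega), parts_ofMul_zero]
        split_ifs <;> omega)
    rw [bip, hempty, show n - (n - 1) - 1 = 0 by omega, Multiset.replicate_zero, add_zero]
    exact fun hd => hd.1 rfl

theorem not_domLT_twosEmpty_of_mem_LB6 (hl : l ∈ LB6 n) :
    ¬ DomLT l (2, -3) (bip (Multiset.replicate (n - 1) 2) 0) (-2, 1) := by
  obtain ⟨i, j, -, -, -, rfl⟩ := hl
  -- with charge `2` the first row's top β-number is at least `2` whatever the partition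
  exact not_domLT_twosEmpty_of_two_le_betaSet (Or.inl (by simp [bip, betaSet]))

end Blocks

/-- Among the block symbols (charge `σ₀` on `PS(n)`, charge `σ₁` on
`L_{B₂}(n)`, charge `σ₂` on `L_{B₆}(n)`), those strictly dominated by the symbol of
`2^{n-1}.∅` of charge `σ₁` are exactly the symbols of charge `σ₀` of the bipartitions
`1^{2n}.∅`, `∅.21^{2n-2}` and `∅.1^{2n}`. -/
theorem decomposition_numbers_stmt19 (n : ℕ) (hn : 2 ≤ n) (t : ℕ) (l : Bipartition)
    (h : (t = 0 ∧ l ∈ PS n) ∨ (t = 1 ∧ l ∈ LB2 n) ∨ (t = 2 ∧ l ∈ LB6 n)) :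
    DomLT l (sigmaT t) (bip (Multiset.replicate (n - 1) 2) 0) (sigmaT 1) ↔
      (t = 0 ∧ (l = bip (Multiset.replicate (2 * n) 1) 0 ∨
                l = bip 0 (hook 2 (2 * n - 2)) ∨
                l = bip 0 (Multiset.replicate (2 * n) 1))) := by
  have hσ₀ : sigmaT 0 = (0, -1) := by norm_num [sigmaT]
  have hσ₁ : sigmaT 1 = (-2, 1) := by norm_num [sigmaT]
  have hσ₂ : sigmaT 2 = (2, -3) := by norm_num [sigmaT]
  rw [hσ₁]
  constructor
  · intro hd
    rcases h with ⟨rfl, hl⟩ | ⟨rfl, hl⟩ | ⟨rfl, hl⟩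
    · rw [hσ₀] at hd
      exact ⟨rfl, eq_of_domLT_twosEmpty_of_mem_PS hn hl hd⟩
    · rw [hσ₁] at hd
      exact absurd hd (not_domLT_twosEmpty_of_mem_LB2 hl)
    · rw [hσ₂] at hd
      exact absurd hd (not_domLT_twosEmpty_of_mem_LB6 hl)
  · rintro ⟨rfl, rfl | rfl | rfl⟩ <;> rw [hσ₀]
    exacts [domLT_onesEmpty_twosEmpty hn, domLT_emptyHookTwo_twosEmpty hn,
      domLT_emptyOnes_twosEmpty (by omega)]
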